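/- arXiv:1001.1651 — 10 statements merged into one kernel-verified Lean document; each statement's English description precedes it below -/
import Mathlib

section
/- Let (Ω, μ) be a finite measure space, ι a nonempty directed preorder, and g : ι → (Ω →ₘ[μ] ℝ) an antitone net of a.e.-equivalence classes of real-valued measurable functions (with the a.e. pointwise order). If 0 is the greatest lower bound of the range of g (IsGLB (Set.range g) 0), then g converges to 0 in measure μ along the atTop filter on ι; that is, for every ε > 0, μ {ω | ε ≤ |g i ω|} tends to 0 along atTop. -/
/-! Fix `ε > 0` and truncate: `ψᵢ = min ‖gᵢ‖ₑ ε`. These are bounded, so on a finite measure space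
their integrals decrease to the integral of their essential infimum `h`, which can be computed
along a countable increasing sequence of indices by monotone convergence. Since `h ≤ gᵢ` a.e. for
every `i` and `0` is the greatest lower bound of the `gᵢ`, `h = 0` a.e., so `∫⁻ ψᵢ → 0`, and
Markov's inequality `μ {ε ≤ |gᵢ|} ≤ ∫⁻ ψᵢ / ε` gives convergence in measure. -/

open MeasureTheory Filter Topology Set
open scoped ENNReal

theorem exists_monotone_seq_ge {ι : Type*} [Preorder ι] [IsDirected ι (· ≤ ·)]
    (j : ℕ → ι) (i : ι) : ∃ m : ℕ → ι, Monotone m ∧ i ≤ m 0 ∧ ∀ n, j n ≤ m n := by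
  choose ub hub_left hub_right using fun a b : ι => directed_of (· ≤ ·) a b
  let m : ℕ → ι := fun n => Nat.rec i (fun n a => ub a (j n)) n
  exact ⟨fun n => m (n + 1), monotone_nat_of_le_succ fun n => hub_left _ _,
    hub_left _ _, fun n => hub_right _ _⟩

theorem Antitone.exists_monotone_seq_iInf_eq {ι α : Type*} [Preorder ι] [IsDirected ι (· ≤ ·)]
    [CompleteLinearOrder α] [TopologicalSpace α] [OrderTopology α] [FirstCountableTopology α]
    {I : ι → α} (hI : Antitone I) (i : ι) :
    ∃ k : ℕ → ι, Monotone k ∧ i ≤ k 0 ∧ ⨅ n, I (k n) = ⨅ i, I i := by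
  obtain ⟨u, hu_anti, hu_lim, hu_mem⟩ :=
    exists_seq_tendsto_sInf (range_nonempty_iff_nonempty.2 ⟨i⟩) (OrderBot.bddBelow (range I))
  choose j hj using hu_mem
  obtain ⟨k, hk, hik, hjk⟩ := exists_monotone_seq_ge j i
  refine ⟨k, hk, hik, le_antisymm ?_ (le_iInf fun n => iInf_le _ _)⟩
  calc ⨅ n, I (k n) ≤ ⨅ n, u n := iInf_mono fun n => (hI (hjk n)).trans (hj n).le
    _ = ⨅ i, I i := iInf_eq_of_tendsto hu_anti hu_lim

section Lebesgue

variable {Ω : Type*} [MeasurableSpace Ω] {μ : Measure Ω}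

theorem meas_ge_le_lintegral_min_div {F : Ω → ℝ≥0∞} (hF : AEMeasurable F μ) {ε : ℝ≥0∞}
    (hε : ε ≠ 0) (hε_top : ε ≠ ∞) :
    μ {ω | ε ≤ F ω} ≤ (∫⁻ ω, min (F ω) ε ∂μ) / ε := by
  have hset : {ω | ε ≤ F ω} = {ω | ε ≤ min (F ω) ε} := by
    ext ω
    simp
  rw [hset]
  exact meas_ge_le_lintegral_div (hF.min aemeasurable_const) hε hε_top

theorem exists_aemeasurable_ae_le_lintegral_eq_iInf {ι : Type*} [Preorder ι]
    [IsDirected ι (· ≤ ·)] {f : ι → Ω → ℝ≥0∞} (hf : ∀ i, AEMeasurable (f i) μ)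
    (hf_anti : ∀ ⦃i j⦄, i ≤ j → f j ≤ᵐ[μ] f i) (i₀ : ι) (hf_fin : ∫⁻ ω, f i₀ ω ∂μ ≠ ∞) :
    ∃ h : Ω → ℝ≥0∞, AEMeasurable h μ ∧ (∀ i, h ≤ᵐ[μ] f i) ∧
      ∫⁻ ω, h ω ∂μ = ⨅ i, ∫⁻ ω, f i ω ∂μ := by
  have lintegral_iInf_seq : ∀ m : ℕ → ι, Monotone m → i₀ ≤ m 0 →
      ∫⁻ ω, ⨅ n, f (m n) ω ∂μ = ⨅ n, ∫⁻ ω, f (m n) ω ∂μ := fun m hm hm0 =>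
    lintegral_iInf' (fun n => hf _)
      ((ae_all_iff.2 fun n => hf_anti (hm n.le_succ)).mono fun _ h => antitone_nat_of_succ_le h)
      (ne_top_of_le_ne_top hf_fin (lintegral_mono_ae (hf_anti hm0)))
  obtain ⟨k, hk, hk0, hk_inf⟩ :=
    Antitone.exists_monotone_seq_iInf_eq (fun i j hij => lintegral_mono_ae (hf_anti hij)) i₀
  refine ⟨fun ω => ⨅ n, f (k n) ω, .iInf fun n => hf _, fun i => ?_,
    (lintegral_iInf_seq k hk hk0).trans hk_inf⟩
  -- Along a sequence `m ≥ k` passing above `i`, the infimum has the same (minimal) integral and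
  -- is smaller, hence agrees a.e. with the infimum along `k`.
  obtain ⟨m, hm, him, hkm⟩ := exists_monotone_seq_ge k i
  have hm0 : i₀ ≤ m 0 := hk0.trans (hkm 0)
  have hle : (fun ω => ⨅ n, f (m n) ω) ≤ᵐ[μ] fun ω => ⨅ n, f (k n) ω :=
    (ae_all_iff.2 fun n => hf_anti (hkm n)).mono fun _ h => iInf_mono h
  have heq := ae_eq_of_ae_le_of_lintegral_le hle
    (ne_top_of_le_ne_top hf_fin
      (lintegral_mono_ae ((hf_anti hm0).mono fun _ h => (iInf_le _ 0).trans h)))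
    (.iInf fun n => hf _)
    (by
      rw [lintegral_iInf_seq k hk hk0, hk_inf, lintegral_iInf_seq m hm hm0]
      exact le_iInf fun n => iInf_le _ _)
  filter_upwards [heq, hf_anti him] with ω hω hi
  exact hω ▸ (iInf_le _ 0).trans hi

theorem MeasureTheory.AEEqFun.ae_le_of_isGLB_range {β ι : Type*} [TopologicalSpace β] [Preorder β]
    {g : ι → Ω →ₘ[μ] β} {b : Ω →ₘ[μ] β} (hb : IsGLB (range g) b) {h : Ω → β}
    (hh : AEStronglyMeasurable h μ) (hle : ∀ i, h ≤ᵐ[μ] g i) : h ≤ᵐ[μ] b := by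
  have hmk : AEEqFun.mk h hh ≤ b := hb.2 <| by
    rintro _ ⟨i, rfl⟩
    exact AEEqFun.coeFn_le.1 <| (AEEqFun.coeFn_mk h hh).trans_le (hle i)
  exact (AEEqFun.coeFn_mk h hh).symm.trans_le (AEEqFun.coeFn_le.2 hmk)

end Lebesgue

theorem tendsto_lintegral_min_enorm_of_isGLB_zero {Ω : Type*} [MeasurableSpace Ω]
    {μ : Measure Ω} [IsFiniteMeasure μ] {ι : Type*} [Preorder ι] [Nonempty ι]
    [IsDirected ι (· ≤ ·)] {g : ι → Ω →ₘ[μ] ℝ} (hg : Antitone g) (h0 : IsGLB (range g) 0)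
    {ε : ℝ≥0∞} (hε : ε ≠ ∞) :
    Tendsto (fun i => ∫⁻ ω, min ‖g i ω‖ₑ ε ∂μ) atTop (𝓝 0) := by
  have hpos : ∀ i, ∀ᵐ ω ∂μ, 0 ≤ g i ω := fun i =>
    (AEEqFun.coeFn_zero (β := ℝ)).symm.trans_le (AEEqFun.coeFn_le.2 (h0.1 ⟨i, rfl⟩))
  have hanti : ∀ ⦃i j⦄, i ≤ j → (fun ω => min ‖g j ω‖ₑ ε) ≤ᵐ[μ] fun ω => min ‖g i ω‖ₑ ε := by
    intro i j hij
    filter_upwards [AEEqFun.coeFn_le.2 (hg hij), hpos j] with ω hle hj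
    rw [Real.enorm_of_nonneg hj, Real.enorm_of_nonneg (hj.trans hle)]
    exact min_le_min_right _ (ENNReal.ofReal_le_ofReal hle)
  have hfin : ∀ i, ∫⁻ ω, min ‖g i ω‖ₑ ε ∂μ ≠ ∞ := fun i =>
    (IsFiniteMeasure.lintegral_lt_top_of_bounded_to_ennreal μ
      ⟨ε.toNNReal, fun _ => ENNReal.coe_toNNReal hε ▸ min_le_right _ _⟩).ne
  obtain ⟨i₀⟩ := ‹Nonempty ι›
  obtain ⟨h, hh, hh_le, hh_int⟩ := exists_aemeasurable_ae_le_lintegral_eq_iInf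
    (fun i => (g i).aemeasurable.enorm.min aemeasurable_const) hanti i₀ (hfin i₀)
  have hh_le_g : ∀ i, (fun ω => (h ω).toReal) ≤ᵐ[μ] g i := by
    intro i
    filter_upwards [hh_le i, hpos i] with ω hω hi
    calc (h ω).toReal ≤ ‖g i ω‖ₑ.toReal :=
          ENNReal.toReal_mono enorm_ne_top (hω.trans (min_le_left _ _))
      _ = g i ω := by rw [toReal_enorm, Real.norm_of_nonneg hi]
  have hh_zero : h =ᵐ[μ] 0 := by
    filter_upwards [AEEqFun.ae_le_of_isGLB_range h0 hh.ennreal_toReal.aestronglyMeasurable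
      hh_le_g, AEEqFun.coeFn_zero (β := ℝ), hh_le i₀] with ω hω h0ω hε₀
    rw [h0ω, Pi.zero_apply] at hω
    exact ((ENNReal.toReal_eq_zero_iff _).1 (hω.antisymm ENNReal.toReal_nonneg)).resolve_right
      (ne_top_of_le_ne_top hε (hε₀.trans (min_le_right _ _)))
  have hinf : ⨅ i, ∫⁻ ω, min ‖g i ω‖ₑ ε ∂μ = 0 := by
    rw [← hh_int]
    exact (lintegral_congr_ae hh_zero).trans lintegral_zero
  exact hinf ▸ tendsto_atTop_iInf fun i j hij => lintegral_mono_ae (hanti hij)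

/-- If `(Ω, μ)` is a finite measure space, `ι` a nonempty directed preorder, and
`g : ι → (Ω →ₘ[μ] ℝ)` an antitone net with greatest lower bound `0`, then `g`
converges to `0` in measure along `atTop`. -/
theorem antitone_isGLB_zero_tendstoInMeasure
    {Ω : Type*} [MeasurableSpace Ω] {μ : Measure Ω} [IsFiniteMeasure μ]
    {ι : Type*} [Preorder ι] [Nonempty ι] [IsDirected ι (· ≤ ·)]
    (g : ι → Ω →ₘ[μ] ℝ) (hg : Antitone g) (h0 : IsGLB (Set.range g) 0) :
    TendstoInMeasure μ (fun i => ⇑(g i)) atTop 0 := by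
  rw [tendstoInMeasure_iff_enorm]
  intro ε hε hε_top
  have hbound := ENNReal.Tendsto.div_const
    (tendsto_lintegral_min_enorm_of_isGLB_zero hg h0 hε_top) (Or.inr hε.ne')
  rw [ENNReal.zero_div] at hbound
  refine tendsto_of_tendsto_of_tendsto_of_le_of_le tendsto_const_nhds hbound
    (fun _ => zero_le) fun i => ?_
  simpa only [Pi.zero_apply, sub_zero] using
    meas_ge_le_lintegral_min_div (g i).aemeasurable.enorm hε.ne' hε_top
end

section
/- Let (Ω, μ) be a σ-finite measure space and (f_n) a sequence of real-valued measurable functions on Ω such that for every measurable set B with μ B < ∞, f_n converges to 0 in measure with respect to μ.restrict B. Then there exist a strictly monotone map k ↦ n_k and a sequence (R_k) of nonnegative real-valued measurable functions such that R_{k+1} ≤ R_k a.e. for every k, R_k → 0 a.e. as k → ∞, and |f_{n_k}| ≤ R_k a.e. for every k. In other words, some subsequence of (f_n) order-converges to 0. -/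
open MeasureTheory Filter Topology
open scoped ENNReal

/-!
Exhaust `Ω` by the spanning sets `S k` of `μ` and choose `n k` so that
`μ (S k ∩ {2⁻¹ ^ k ≤ |f (n k)|}) < 2⁻¹ ^ k`. By Borel–Cantelli, almost every point lies
outside these sets eventually, hence `f (n k) → 0` a.e. The tail suprema
`R k = ⨆ j, |f (n (j + k))|` of an a.e. convergent sequence then decrease to `0` a.e. and
dominate `|f (n k)|`.
-/

noncomputable def tailSup (a : ℕ → ℝ) (k : ℕ) : ℝ := ⨆ j, |a (j + k)|

theorem tailSup_nonneg (a : ℕ → ℝ) (k : ℕ) : 0 ≤ tailSup a k :=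
  Real.iSup_nonneg fun _ => abs_nonneg _

section TailSup

variable {a : ℕ → ℝ}

theorem bddAbove_range_abs_add (ha : BddAbove (Set.range fun j => |a j|)) (k : ℕ) :
    BddAbove (Set.range fun j => |a (j + k)|) :=
  ha.mono <| Set.range_comp_subset_range (· + k) fun j => |a j|

theorem abs_le_tailSup (ha : BddAbove (Set.range fun j => |a j|)) (k : ℕ) :
    |a k| ≤ tailSup a k := by
  simpa [tailSup] using le_ciSup (bddAbove_range_abs_add ha k) 0

theorem tailSup_succ_le (ha : BddAbove (Set.range fun j => |a j|)) (k : ℕ) :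
    tailSup a (k + 1) ≤ tailSup a k :=
  ciSup_le fun j => by
    rw [← add_assoc, add_right_comm]
    exact le_ciSup (bddAbove_range_abs_add ha k) (j + 1)

theorem tendsto_tailSup_zero (ha : Tendsto a atTop (𝓝 0)) :
    Tendsto (tailSup a) atTop (𝓝 0) := by
  rw [Metric.tendsto_atTop] at ha ⊢
  intro ε hε
  obtain ⟨N, hN⟩ := ha (ε / 2) (half_pos hε)
  refine ⟨N, fun k hk => ?_⟩
  have : tailSup a k ≤ ε / 2 := ciSup_le fun j => by
    simpa using (hN (j + k) (by omega)).le
  rw [Real.dist_0_eq_abs, abs_of_nonneg (tailSup_nonneg a k)]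
  linarith

end TailSup

section Measure

variable {Ω E : Type*} [MeasurableSpace Ω] {μ : Measure Ω}

theorem exists_antitone_dominating_of_ae_tendsto_zero {f : ℕ → Ω → ℝ}
    (hf : ∀ n, Measurable (f n)) (hlim : ∀ᵐ ω ∂μ, Tendsto (fun n => f n ω) atTop (𝓝 0)) :
    ∃ R : ℕ → Ω → ℝ, (∀ k, Measurable (R k)) ∧ (∀ k ω, 0 ≤ R k ω) ∧
      (∀ k, ∀ᵐ ω ∂μ, R (k + 1) ω ≤ R k ω) ∧
      (∀ᵐ ω ∂μ, Tendsto (fun k => R k ω) atTop (𝓝 0)) ∧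
      (∀ k, ∀ᵐ ω ∂μ, |f k ω| ≤ R k ω) := by
  have hbdd : ∀ᵐ ω ∂μ, BddAbove (Set.range fun n => |f n ω|) := by
    filter_upwards [hlim] with ω hω using hω.abs.bddAbove_range
  refine ⟨fun k ω => tailSup (f · ω) k, fun k => ?_, fun k ω => tailSup_nonneg _ k,
    fun k => ?_, ?_, fun k => ?_⟩
  · exact Measurable.iSup fun j => (hf (j + k)).abs
  · filter_upwards [hbdd] with ω hω using tailSup_succ_le hω k
  · filter_upwards [hlim] with ω hω using tendsto_tailSup_zero hω
  · filter_upwards [hbdd] with ω hω using abs_le_tailSup hω k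

theorem exists_seq_ae_tendsto_of_forall_tendstoInMeasure_restrict [SigmaFinite μ]
    [PseudoEMetricSpace E] {f : ℕ → Ω → E} {g : Ω → E}
    (hconv : ∀ B : Set Ω, MeasurableSet B → μ B < ∞ →
      TendstoInMeasure (μ.restrict B) f atTop g) :
    ∃ n : ℕ → ℕ, StrictMono n ∧ ∀ᵐ ω ∂μ, Tendsto (fun k => f (n k) ω) atTop (𝓝 (g ω)) := by
  have hpos : ∀ k : ℕ, (0 : ℝ≥0∞) < 2⁻¹ ^ k := fun k => ENNReal.pow_pos (by simp) k
  have hsmall : ∀ k, ∀ᶠ i in atTop,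
      μ.restrict (spanningSets μ k) {ω | 2⁻¹ ^ k ≤ edist (f i ω) (g ω)} < 2⁻¹ ^ k := fun k =>
    (hconv _ (measurableSet_spanningSets μ k) (measure_spanningSets_lt_top μ k) _
      (hpos k)).eventually (gt_mem_nhds (hpos k))
  obtain ⟨n, hn, hnk⟩ := extraction_forall_of_eventually hsmall
  set s : ℕ → Set Ω := fun k => {ω | 2⁻¹ ^ k ≤ edist (f (n k) ω) (g ω)} ∩ spanningSets μ k
  have hs : ∀ k, μ (s k) ≤ 2⁻¹ ^ k := fun k => by
    simpa only [Measure.restrict_apply' (measurableSet_spanningSets μ k)] using (hnk k).le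
  have hae : ∀ᵐ ω ∂μ, ∀ᶠ k in atTop, ω ∉ s k := ae_eventually_notMem <|
    ne_top_of_le_ne_top (by simp) (ENNReal.tsum_le_tsum hs)
  refine ⟨n, hn, ?_⟩
  filter_upwards [hae] with ω hω
  have hbound : ∀ᶠ k in atTop, edist (f (n k) ω) (g ω) ≤ 2⁻¹ ^ k := by
    filter_upwards [hω, eventually_mem_spanningSets μ ω] with k hks hkS
    exact (not_le.mp fun h => hks ⟨h, hkS⟩).le
  exact tendsto_iff_edist_tendsto_0.mpr <| tendsto_of_tendsto_of_tendsto_of_le_of_le'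
    tendsto_const_nhds (ENNReal.tendsto_pow_atTop_nhds_zero_of_lt_one (by simp))
    (Eventually.of_forall fun _ => zero_le) hbound

end Measure

/-- On a σ-finite measure space, if a sequence of measurable functions converges to `0`
in measure on every set of finite measure, then some subsequence `(f (n k))`
order-converges to `0`: it is dominated by an a.e.-decreasing sequence of nonnegative
measurable functions converging to `0` a.e. (Proposition 2.3 of the paper,
commutative case). -/
theorem exists_subseq_order_tendsto_zero_of_tendstoInMeasure_restrict
    {Ω : Type*} [MeasurableSpace Ω] {μ : Measure Ω} [SigmaFinite μ]
    (f : ℕ → Ω → ℝ) (hf : ∀ n, Measurable (f n))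
    (hconv : ∀ B : Set Ω, MeasurableSet B → μ B < ∞ →
      TendstoInMeasure (μ.restrict B) f atTop 0) :
    ∃ n : ℕ → ℕ, StrictMono n ∧
      ∃ R : ℕ → Ω → ℝ, (∀ k, Measurable (R k)) ∧ (∀ k ω, 0 ≤ R k ω) ∧
        (∀ k, ∀ᵐ ω ∂μ, R (k + 1) ω ≤ R k ω) ∧
        (∀ᵐ ω ∂μ, Tendsto (fun k => R k ω) atTop (𝓝 0)) ∧
        (∀ k, ∀ᵐ ω ∂μ, |f (n k) ω| ≤ R k ω) := by
  obtain ⟨n, hn, hlim⟩ := exists_seq_ae_tendsto_of_forall_tendstoInMeasure_restrict hconv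
  exact ⟨n, hn, exists_antitone_dominating_of_ae_tendsto_zero (fun k => hf (n k)) hlim⟩
end

section
/- Let A be a unital C*-algebra, and let a, b ∈ A with a selfadjoint, 0 ≤ b, and −b ≤ a ≤ b. Let x := cfc (fun t : ℝ => (1 + t)^(-(1/2 : ℝ))) b be the element obtained by applying the continuous functional calculus of b to the function t ↦ (1+t)^{−1/2}. Then −1 ≤ x * a * x ≤ 1, and consequently ‖x * a * x‖ ≤ 1. -/
/-!
Conjugating `-b ≤ a ≤ b` by the selfadjoint `x = (1 + b)^{-1/2}` gives `-xbx ≤ xax ≤ xbx`, and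
`xbx = b (1 + b)⁻¹ ≤ 1` because `t / (1 + t) ≤ 1` on the spectrum of `b ⊆ [0, ∞)`. An element
squeezed between `-1` and `1` is selfadjoint with spectrum in `[-1, 1]`, so its norm is at most `1`.
-/

lemma Real.one_add_rpow_neg_half_conj_le_one {t : ℝ} (ht : 0 ≤ t) :
    (1 + t) ^ (-(1 / 2 : ℝ)) * t * (1 + t) ^ (-(1 / 2 : ℝ)) ≤ 1 := by
  have hpos : 0 < 1 + t := by linarith
  calc (1 + t) ^ (-(1 / 2 : ℝ)) * t * (1 + t) ^ (-(1 / 2 : ℝ))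
      = t * (1 + t) ^ (-(1 / 2 : ℝ) + -(1 / 2)) := by rw [Real.rpow_add hpos]; ring
    _ = t / (1 + t) := by norm_num [Real.rpow_neg_one, div_eq_mul_inv]
    _ ≤ 1 := (div_le_one hpos).mpr (by linarith)

lemma cfc_mul_self_mul_cfc {A : Type*} [Ring A] [StarRing A] [TopologicalSpace A] [Algebra ℝ A]
    [ContinuousFunctionalCalculus ℝ A IsSelfAdjoint] (f : ℝ → ℝ) {b : A}
    (hf : ContinuousOn f (spectrum ℝ b)) (hb : IsSelfAdjoint b := by cfc_tac) :
    cfc f b * b * cfc f b = cfc (fun t ↦ f t * t * f t) b := by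
  nth_rw 2 [← cfc_id' ℝ b]
  rw [← cfc_mul .., ← cfc_mul ..]

section

variable {A : Type*} [CStarAlgebra A] [PartialOrder A] [StarOrderedRing A]

lemma norm_le_of_neg_algebraMap_le_of_le_algebraMap {c : A} {r : ℝ} (hr : 0 ≤ r)
    (h₁ : -algebraMap ℝ A r ≤ c) (h₂ : c ≤ algebraMap ℝ A r) : ‖c‖ ≤ r := by
  rw [← map_neg] at h₁
  have hc : IsSelfAdjoint c := IsSelfAdjoint.of_ge h₁ (.algebraMap A (.all _))
  have lower := (algebraMap_le_iff_le_spectrum hc).mp h₁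
  have upper := (le_algebraMap_iff_spectrum_le hc).mp h₂
  rw [← cfc_id ℝ c]
  exact norm_cfc_le hr fun t ht ↦ abs_le.mpr ⟨lower t ht, upper t ht⟩

lemma norm_le_one_of_neg_one_le_of_le_one {c : A} (h₁ : -1 ≤ c) (h₂ : c ≤ 1) : ‖c‖ ≤ 1 :=
  norm_le_of_neg_algebraMap_le_of_le_algebraMap zero_le_one (by simpa using h₁) (by simpa using h₂)

lemma cfc_one_add_rpow_neg_half_conj_le_one {b : A} (hb : 0 ≤ b) :
    cfc (fun t : ℝ ↦ (1 + t) ^ (-(1 / 2 : ℝ))) b * b *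
      cfc (fun t : ℝ ↦ (1 + t) ^ (-(1 / 2 : ℝ))) b ≤ 1 := by
  have hspec := (StarOrderedRing.nonneg_iff_spectrum_nonneg (R := ℝ) b).mp hb
  have hcont : ContinuousOn (fun t : ℝ ↦ (1 + t) ^ (-(1 / 2 : ℝ))) (spectrum ℝ b) :=
    .rpow_const (by fun_prop) fun t ht ↦ .inl (by linarith [hspec t ht])
  rw [cfc_mul_self_mul_cfc _ hcont]
  exact cfc_le_one _ _ fun t ht ↦ Real.one_add_rpow_neg_half_conj_le_one (hspec t ht)

end

theorem neg_one_le_conj_le_one_of_order_dominated_general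
    {A : Type*} [CStarAlgebra A] [PartialOrder A] [StarOrderedRing A]
    (a b : A) (hb : 0 ≤ b)
    (hba : -b ≤ a) (hab : a ≤ b) :
    -1 ≤ cfc (fun t : ℝ => (1 + t) ^ (-(1 / 2 : ℝ))) b * a *
        cfc (fun t : ℝ => (1 + t) ^ (-(1 / 2 : ℝ))) b ∧
      cfc (fun t : ℝ => (1 + t) ^ (-(1 / 2 : ℝ))) b * a *
        cfc (fun t : ℝ => (1 + t) ^ (-(1 / 2 : ℝ))) b ≤ 1 ∧
      ‖cfc (fun t : ℝ => (1 + t) ^ (-(1 / 2 : ℝ))) b * a *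
        cfc (fun t : ℝ => (1 + t) ^ (-(1 / 2 : ℝ))) b‖ ≤ 1 := by
  set x := cfc (fun t : ℝ => (1 + t) ^ (-(1 / 2 : ℝ))) b
  have hx : star x = x := (cfc_predicate _ b : IsSelfAdjoint x).star_eq
  have hxbx : x * b * x ≤ 1 := cfc_one_add_rpow_neg_half_conj_le_one hb
  have upper : x * a * x ≤ 1 := by
    have := star_left_conjugate_le_conjugate hab x
    rw [hx] at this
    exact this.trans hxbx
  have lower : -1 ≤ x * a * x := by
    have := star_left_conjugate_le_conjugate hba x
    rw [hx, mul_neg, neg_mul] at this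
    exact (neg_le_neg hxbx).trans this
  exact ⟨lower, upper, norm_le_one_of_neg_one_le_of_le_one lower upper⟩

/-- In a unital C*-algebra, if `a` is selfadjoint, `0 ≤ b` and `-b ≤ a ≤ b`, then for
`x = (1 + b)^{-1/2}` (defined via the continuous functional calculus of `b`) one has
`-1 ≤ x * a * x ≤ 1`, hence `‖x * a * x‖ ≤ 1` (key estimate in Theorem 2.1 of the
paper). -/
theorem neg_one_le_conj_le_one_of_order_dominated
    {A : Type*} [CStarAlgebra A] [PartialOrder A] [StarOrderedRing A]
    (a b : A) (ha : IsSelfAdjoint a) (hb : 0 ≤ b)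
    (hba : -b ≤ a) (hab : a ≤ b) :
    -1 ≤ cfc (fun t : ℝ => (1 + t) ^ (-(1 / 2 : ℝ))) b * a *
        cfc (fun t : ℝ => (1 + t) ^ (-(1 / 2 : ℝ))) b ∧
      cfc (fun t : ℝ => (1 + t) ^ (-(1 / 2 : ℝ))) b * a *
        cfc (fun t : ℝ => (1 + t) ^ (-(1 / 2 : ℝ))) b ≤ 1 ∧
      ‖cfc (fun t : ℝ => (1 + t) ^ (-(1 / 2 : ℝ))) b * a *
        cfc (fun t : ℝ => (1 + t) ^ (-(1 / 2 : ℝ))) b‖ ≤ 1 :=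
  neg_one_le_conj_le_one_of_order_dominated_general a b hb hba hab
end

section
/- Let H be a complex Hilbert space and (P_n)_{n ∈ ℕ} a sequence of pairwise orthogonal orthogonal projections on H, i.e., each P_n : H →L H satisfies P_n ∘ P_n = P_n and ⟪P_n x, y⟫ = ⟪x, P_n y⟫ for all x, y ∈ H, and P_n ∘ P_m = 0 whenever n ≠ m. Then for every ε > 0 and every finite set s of vectors of H, there exist infinitely many n ∈ ℕ (i.e., frequently along atTop) such that √n · ‖P_n ξ‖ < ε for all ξ ∈ s. -/
/-!
A finite sum of pairwise orthogonal orthogonal projections is again an orthogonal projection,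
so Bessel's inequality `∑ₙ ‖Pₙ ξ‖² ≤ ‖ξ‖²` holds and makes `n ↦ ∑_{ξ ∈ s} ‖Pₙ ξ‖²` summable.
A summable sequence cannot eventually dominate `ε² / n`, because the harmonic series diverges; hence
`n · ‖Pₙ ξ‖² < ε²` for all `ξ ∈ s` at infinitely many `n`.
-/

open Filter
open scoped InnerProductSpace

theorem Summable.frequently_natCast_mul_lt {f : ℕ → ℝ} (hf : Summable f) {δ : ℝ} (hδ : 0 < δ) :
    ∃ᶠ n in atTop, n * f n < δ := by
  by_contra h
  have hge : ∀ᶠ n : ℕ in atTop, δ ≤ n * f n := by simpa [not_frequently] using h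
  have hharmonic : Summable fun n : ℕ => δ * (n : ℝ)⁻¹ := by
    refine hf.of_norm_bounded_eventually_nat ?_
    filter_upwards [hge, eventually_gt_atTop 0] with n hn hpos
    have hpos' : (0 : ℝ) < n := Nat.cast_pos.mpr hpos
    rw [Real.norm_of_nonneg (by positivity), ← div_eq_mul_inv, div_le_iff₀ hpos', mul_comm]
    exact hn
  exact Real.not_summable_natCast_inv ((summable_mul_left_iff hδ.ne').mp hharmonic)

namespace LinearMap

variable {𝕜 E ι : Type*} [RCLike 𝕜] [NormedAddCommGroup E] [InnerProductSpace 𝕜 E]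

theorem IsSymmetricProjection.re_inner_map_self {p : E →ₗ[𝕜] E} (hp : p.IsSymmetricProjection)
    (x : E) : RCLike.re ⟪p x, x⟫_𝕜 = ‖p x‖ ^ 2 := by
  conv_lhs => rw [← hp.isIdempotentElem.eq, Module.End.mul_apply, hp.isSymmetric]
  exact inner_self_eq_norm_sq _

theorem IsSymmetricProjection.norm_map_le {p : E →ₗ[𝕜] E} (hp : p.IsSymmetricProjection)
    (x : E) : ‖p x‖ ≤ ‖x‖ := by
  have h : ‖p x‖ ^ 2 ≤ ‖p x‖ * ‖x‖ := hp.re_inner_map_self x ▸ re_inner_le_norm _ _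
  nlinarith [norm_nonneg (p x), norm_nonneg x]

theorem isSymmetricProjection_sum {p : ι → E →ₗ[𝕜] E} (hp : OrthogonalIdempotents p)
    (hsymm : ∀ i, (p i).IsSymmetric) (s : Finset ι) : (∑ i ∈ s, p i).IsSymmetricProjection :=
  ⟨hp.isIdempotentElem_sum, isSymmetric_sum s fun i _ => hsymm i⟩

theorem sum_norm_sq_map_le {p : ι → E →ₗ[𝕜] E} (hp : OrthogonalIdempotents p)
    (hsymm : ∀ i, (p i).IsSymmetric) (s : Finset ι) (x : E) :
    ∑ i ∈ s, ‖p i x‖ ^ 2 ≤ ‖x‖ ^ 2 := by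
  have hq := isSymmetricProjection_sum hp hsymm s
  calc ∑ i ∈ s, ‖p i x‖ ^ 2
      = ∑ i ∈ s, RCLike.re ⟪p i x, x⟫_𝕜 := by
        refine Finset.sum_congr rfl fun i _ => ?_
        exact (IsSymmetricProjection.re_inner_map_self ⟨hp.idem i, hsymm i⟩ x).symm
    _ = ‖(∑ i ∈ s, p i) x‖ ^ 2 := by
        rw [← hq.re_inner_map_self, LinearMap.sum_apply, sum_inner, map_sum]
    _ ≤ ‖x‖ ^ 2 := by gcongr; exact hq.norm_map_le x

theorem summable_norm_sq_map {p : ι → E →ₗ[𝕜] E} (hp : OrthogonalIdempotents p)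
    (hsymm : ∀ i, (p i).IsSymmetric) (x : E) : Summable fun i => ‖p i x‖ ^ 2 :=
  summable_of_sum_le (fun _ => sq_nonneg _) fun s => sum_norm_sq_map_le hp hsymm s x

end LinearMap

theorem frequently_sqrt_mul_norm_proj_lt_general
    {H : Type*} [NormedAddCommGroup H] [InnerProductSpace ℂ H]
    (P : ℕ → H →L[ℂ] H)
    (hidem : ∀ n, (P n).comp (P n) = P n)
    (hsa : ∀ n (x y : H), ⟪P n x, y⟫_ℂ = ⟪x, P n y⟫_ℂ)
    (horth : ∀ n m, n ≠ m → (P n).comp (P m) = 0) :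
    ∀ ε > (0 : ℝ), ∀ s : Finset H,
      ∃ᶠ n : ℕ in atTop, ∀ ξ ∈ s, Real.sqrt n * ‖P n ξ‖ < ε := by
  intro ε hε s
  have hP : OrthogonalIdempotents fun n => (P n : H →ₗ[ℂ] H) :=
    OrthogonalIdempotents.map ContinuousLinearMap.toLinearMapRingHom ⟨hidem, horth⟩
  have hsum : Summable fun n => ∑ ξ ∈ s, ‖P n ξ‖ ^ 2 :=
    summable_sum fun ξ _ => LinearMap.summable_norm_sq_map hP hsa ξ
  refine (hsum.frequently_natCast_mul_lt (pow_pos hε 2)).mono fun n hn ξ hξ => ?_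
  refine lt_of_pow_lt_pow_left₀ 2 hε.le ?_
  calc (Real.sqrt n * ‖P n ξ‖) ^ 2 = n * ‖P n ξ‖ ^ 2 := by
        rw [mul_pow, Real.sq_sqrt n.cast_nonneg]
    _ ≤ n * ∑ ξ ∈ s, ‖P n ξ‖ ^ 2 := by
        gcongr
        exact Finset.single_le_sum (fun ξ _ => sq_nonneg ‖P n ξ‖) hξ
    _ < ε ^ 2 := hn

/-- If `(P n)` is a sequence of pairwise orthogonal orthogonal projections on a complex
Hilbert space, then for every `ε > 0` and every finite set `s` of vectors, there are
infinitely many `n` with `√n · ‖P n ξ‖ < ε` for all `ξ ∈ s` (key claim in Theorem 4.4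
of the paper). -/
theorem frequently_sqrt_mul_norm_proj_lt
    {H : Type*} [NormedAddCommGroup H] [InnerProductSpace ℂ H] [CompleteSpace H]
    (P : ℕ → H →L[ℂ] H)
    (hidem : ∀ n, (P n).comp (P n) = P n)
    (hsa : ∀ n (x y : H), ⟪P n x, y⟫_ℂ = ⟪x, P n y⟫_ℂ)
    (horth : ∀ n m, n ≠ m → (P n).comp (P m) = 0) :
    ∀ ε > (0 : ℝ), ∀ s : Finset H,
      ∃ᶠ n : ℕ in atTop, ∀ ξ ∈ s, Real.sqrt n * ‖P n ξ‖ < ε :=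
  frequently_sqrt_mul_norm_proj_lt_general P hidem hsa horth
end

section
/- Let H be a complex Hilbert space and (P_n)_{n ∈ ℕ} a sequence of pairwise orthogonal orthogonal projections on H (each P_n : H →L H satisfies P_n ∘ P_n = P_n and ⟪P_n x, y⟫ = ⟪x, P_n y⟫; P_n ∘ P_m = 0 for n ≠ m). Then the zero operator belongs to the closure, in the weak operator topology on H →L H, of the set {√n • P_n : n ∈ ℕ, n ≥ 1}. -/
/-!
Since `|⟪y, √n • P n x⟫| ≤ √n * ‖P n y‖ * ‖P n x‖` and, by Bessel's inequality, `‖P n y‖ * ‖P n x‖`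
is summable, the set of `n` where `|⟪y, √n • P n x⟫| ≥ ε` has finite mass for the weights `1 / √n`.
So `√n • P n → 0` in the weak operator topology along the filter of sets whose complement has
finite `1 / √n`-mass, and this filter is proper because `∑ 1 / √n` diverges.
-/

open MeasureTheory Filter Topology RCLike
open scoped InnerProductSpace NNReal ENNReal

section StarProjection

variable {𝕜 E : Type*} [RCLike 𝕜] [NormedAddCommGroup E] [InnerProductSpace 𝕜 E] [CompleteSpace E]

theorem IsStarProjection.inner_apply_right {p : E →L[𝕜] E} (hp : IsStarProjection p) (x y : E) :
    ⟪x, p y⟫_𝕜 = ⟪p x, p y⟫_𝕜 := by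
  conv_lhs => rw [← hp.isIdempotentElem.eq]
  exact (hp.isSelfAdjoint.isSymmetric x (p y)).symm

theorem IsStarProjection.re_inner_self_apply {p : E →L[𝕜] E} (hp : IsStarProjection p) (x : E) :
    re ⟪x, p x⟫_𝕜 = ‖p x‖ ^ 2 := by
  rw [hp.inner_apply_right]
  exact inner_self_eq_norm_sq _

theorem IsStarProjection.norm_inner_apply_le {p : E →L[𝕜] E} (hp : IsStarProjection p) (x y : E) :
    ‖⟪x, p y⟫_𝕜‖ ≤ ‖p x‖ * ‖p y‖ := by
  rw [hp.inner_apply_right]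
  exact norm_inner_le_norm _ _

variable {ι : Type*} {P : ι → E →L[𝕜] E}

theorem IsStarProjection.sum (hP : ∀ i, IsStarProjection (P i))
    (horth : Pairwise fun i j => P i * P j = 0) (s : Finset ι) :
    IsStarProjection (∑ i ∈ s, P i) := by
  classical
  induction s using Finset.induction_on with
  | empty => simp [IsStarProjection.zero]
  | insert a s ha ih =>
    rw [Finset.sum_insert ha]
    refine (hP a).add ih ?_
    rw [Finset.mul_sum]
    exact Finset.sum_eq_zero fun i hi => horth (ne_of_mem_of_not_mem hi ha).symm

theorem IsStarProjection.sum_norm_apply_sq_le (hP : ∀ i, IsStarProjection (P i))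
    (horth : Pairwise fun i j => P i * P j = 0) (s : Finset ι) (x : E) :
    ∑ i ∈ s, ‖P i x‖ ^ 2 ≤ ‖x‖ ^ 2 := by
  have hQ := IsStarProjection.sum hP horth s
  calc ∑ i ∈ s, ‖P i x‖ ^ 2 = ‖(∑ i ∈ s, P i) x‖ ^ 2 := by
        rw [← hQ.re_inner_self_apply, sum_apply, inner_sum, map_sum]
        simp only [(hP _).re_inner_self_apply]
    _ ≤ ‖x‖ ^ 2 := by
        gcongr
        exact ((∑ i ∈ s, P i).le_opNorm x).trans
          (mul_le_of_le_one_left (norm_nonneg x) (hQ.norm_le _))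

theorem IsStarProjection.summable_norm_apply_mul_norm_apply (hP : ∀ i, IsStarProjection (P i))
    (horth : Pairwise fun i j => P i * P j = 0) (x y : E) :
    Summable fun i => ‖P i x‖ * ‖P i y‖ := by
  have hsq (z : E) : Summable fun i => ‖P i z‖ ^ 2 :=
    summable_of_sum_le (fun _ => sq_nonneg _) (IsStarProjection.sum_norm_apply_sq_le hP horth · z)
  refine .of_nonneg_of_le (fun _ => by positivity) (fun i => ?_) (((hsq x).add (hsq y)).div_const 2)
  linarith [two_mul_le_add_sq ‖P i x‖ ‖P i y‖]

end StarProjection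

theorem MeasureTheory.Measure.cofinite_neBot_iff {α : Type*} [MeasurableSpace α] {μ : Measure α} :
    μ.cofinite.NeBot ↔ μ Set.univ = ∞ := by
  rw [neBot_iff, Ne, ← empty_mem_iff_bot, Measure.mem_cofinite, Set.compl_empty, not_lt, top_le_iff]

section WeightedCount

variable {α : Type*} [MeasurableSpace α] [MeasurableSingletonClass α]

theorem withDensity_count_singleton (w : α → ℝ≥0) (a : α) :
    Measure.count.withDensity (fun a => (w a : ℝ≥0∞)) {a} = w a := by
  rw [withDensity_apply _ (measurableSet_singleton a), lintegral_singleton,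
    Measure.count_singleton, mul_one]

theorem cofinite_withDensity_count_le_cofinite (w : α → ℝ≥0) :
    (Measure.count.withDensity fun a => (w a : ℝ≥0∞)).cofinite ≤ cofinite := fun s hs => by
  rw [Measure.mem_cofinite, ← Set.biUnion_of_singleton sᶜ]
  exact measure_biUnion_lt_top hs fun a _ => by
    rw [withDensity_count_singleton]
    exact ENNReal.coe_lt_top

theorem cofinite_withDensity_count_neBot {w : α → ℝ≥0} (hw : ¬Summable w) :
    (Measure.count.withDensity fun a => (w a : ℝ≥0∞)).cofinite.NeBot := by
  rw [Measure.cofinite_neBot_iff, withDensity_apply _ MeasurableSet.univ, Measure.restrict_univ,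
    lintegral_count]
  exact ENNReal.tsum_coe_ne_top_iff_summable.not_right.mpr hw

theorem tendsto_cofinite_withDensity_count [Countable α] {F : Type*} [SeminormedAddCommGroup F]
    {f : α → F} {w : α → ℝ≥0} {g : α → ℝ} (hg : Summable g) (hfg : ∀ a, ‖f a‖ * w a ≤ g a) :
    Tendsto f (Measure.count.withDensity fun a => (w a : ℝ≥0∞)).cofinite (𝓝 0) := by
  refine Metric.tendsto_nhds.mpr fun ε hε => Measure.eventually_cofinite.mpr ?_
  set S := {a | ¬dist (f a) 0 < ε}
  calc Measure.count.withDensity (fun a => (w a : ℝ≥0∞)) S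
      = ∫⁻ a in S, (w a : ℝ≥0∞) ∂Measure.count :=
        withDensity_apply _ (Set.to_countable S).measurableSet
    _ ≤ ∫⁻ a in S, ENNReal.ofReal (g a / ε) ∂Measure.count := by
        refine setLIntegral_mono' (Set.to_countable S).measurableSet fun a ha => ?_
        have hεf : ε ≤ ‖f a‖ := by simpa [S] using ha
        rw [← ENNReal.ofReal_coe_nnreal]
        refine ENNReal.ofReal_le_ofReal ((le_div_iff₀ hε).mpr ?_)
        nlinarith [hfg a, (w a).2]
    _ ≤ ∫⁻ a, ENNReal.ofReal (g a / ε) ∂Measure.count := setLIntegral_le_lintegral _ _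
    _ < ∞ := by
        rw [lintegral_count]
        exact (hg.div_const ε).tsum_ofReal_lt_top

end WeightedCount

theorem not_summable_inv_sqrt_nat : ¬Summable fun n : ℕ => (NNReal.sqrt n)⁻¹ := by
  rw [← NNReal.summable_coe]
  simpa [Real.sqrt_eq_rpow] using Real.summable_nat_rpow_inv (p := 1 / 2).not.mpr (by norm_num)

noncomputable def invSqrtCofinite : Filter ℕ :=
  (Measure.count.withDensity fun n : ℕ => (((NNReal.sqrt n)⁻¹ : ℝ≥0) : ℝ≥0∞)).cofinite

instance invSqrtCofinite_neBot : invSqrtCofinite.NeBot :=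
  cofinite_withDensity_count_neBot not_summable_inv_sqrt_nat

theorem invSqrtCofinite_le_atTop : invSqrtCofinite ≤ atTop :=
  Nat.cofinite_eq_atTop ▸ cofinite_withDensity_count_le_cofinite _

theorem tendsto_ofCLM_sqrt_smul_invSqrtCofinite {𝕜 E : Type*} [RCLike 𝕜] [NormedAddCommGroup E]
    [InnerProductSpace 𝕜 E] [CompleteSpace E] {P : ℕ → E →L[𝕜] E}
    (hP : ∀ n, IsStarProjection (P n)) (horth : Pairwise fun n m => P n * P m = 0) :
    Tendsto (fun n : ℕ => ContinuousLinearMapWOT.ofCLM ((Real.sqrt n : 𝕜) • P n))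
      invSqrtCofinite (𝓝 0) := by
  rw [ContinuousLinearMapWOT.tendsto_iff_forall_inner_apply_tendsto]
  intro x y
  simp only [ContinuousLinearMapWOT.ofCLM_apply, smul_apply,
    ContinuousLinearMapWOT.zero_apply, inner_zero_right]
  refine tendsto_cofinite_withDensity_count
    (IsStarProjection.summable_norm_apply_mul_norm_apply hP horth y x) fun n => ?_
  rw [inner_smul_right, norm_mul, norm_ofReal, abs_of_nonneg (Real.sqrt_nonneg _),
    NNReal.coe_inv, Real.coe_sqrt, NNReal.coe_natCast, mul_right_comm]
  calc √n * (√n)⁻¹ * ‖⟪y, P n x⟫_𝕜‖ ≤ ‖⟪y, P n x⟫_𝕜‖ :=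
        mul_le_of_le_one_left (norm_nonneg _) (mul_inv_le_one (a := √(n : ℝ)))
    _ ≤ ‖P n y‖ * ‖P n x‖ := (hP n).norm_inner_apply_le y x

/-- If `(P n)` is a sequence of pairwise orthogonal orthogonal projections on a complex
Hilbert space, then the zero operator belongs to the closure, in the weak operator
topology, of the set `{√n • P n : n ≥ 1}` (established in the proof of Theorem 4.4 of
the paper). -/
theorem zero_mem_wotClosure_sqrt_smul_proj
    {H : Type*} [NormedAddCommGroup H] [InnerProductSpace ℂ H] [CompleteSpace H]
    (P : ℕ → H →L[ℂ] H)
    (hidem : ∀ n, (P n).comp (P n) = P n)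
    (hsa : ∀ n (x y : H), ⟪P n x, y⟫_ℂ = ⟪x, P n y⟫_ℂ)
    (horth : ∀ n m, n ≠ m → (P n).comp (P m) = 0) :
    (0 : H →WOT[ℂ] H) ∈ closure
      {T : H →WOT[ℂ] H | ∃ n : ℕ, 1 ≤ n ∧
        T = ContinuousLinearMapWOT.ofCLM ((Real.sqrt n : ℂ) • P n)} := by
  have hP (n : ℕ) : IsStarProjection (P n) :=
    ⟨hidem n, ContinuousLinearMap.isSelfAdjoint_iff_isSymmetric.mpr (hsa n)⟩
  refine mem_closure_of_tendsto (tendsto_ofCLM_sqrt_smul_invSqrtCofinite hP horth) ?_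
  filter_upwards [invSqrtCofinite_le_atTop (eventually_ge_atTop 1)] with n hn using ⟨n, hn, rfl⟩
end

section
/- Let (Ω, μ) be a finite measure space with no atoms (μ is nonatomic) and μ(Ω) > 0. Then there exists a sequence (f_n) of nonnegative real-valued measurable functions on Ω such that f_n → 0 in measure μ, but (f_n) does not (o)-converge to 0: there is no sequence (S_n) of measurable functions with S_{n+1} ≤ S_n a.e. for all n, S_n → 0 a.e., and f_n ≤ S_n a.e. for all n. -/
/-!
On a nonatomic space every set of positive measure contains subsets of arbitrarily small
positive measure, so by exhaustion `Ω` is, up to a null set, a countable disjoint union of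
pieces of measure at most `1 / n`, for every `n`. Enumerating the pieces of all these
partitions gives sets `B m` with `μ (B m) → 0` such that almost every point lies in infinitely
many of them: a countable version of the typewriter sequence. The indicators of the `B m` tend
to `0` in measure, but almost everywhere they equal `1` infinitely often. An (o)-convergent
sequence of nonnegative functions is squeezed between `0` and `S n → 0`, hence converges
almost everywhere, so the indicators are not (o)-convergent.
-/

open MeasureTheory Filter Topology
open scoped ENNReal

lemma ENNReal.tendsto_uncurry_cofinite_nhds_zero {α : Type*} {u : ℕ → α → ℝ≥0∞} {v : ℕ → ℝ≥0∞}
    (hu : ∀ n, Tendsto (u n) cofinite (𝓝 0)) (hv : Tendsto v atTop (𝓝 0))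
    (huv : ∀ n a, u n a ≤ v n) : Tendsto (Function.uncurry u) cofinite (𝓝 0) := by
  refine ENNReal.tendsto_nhds_zero.2 fun ε hε => ?_
  obtain ⟨N, hN⟩ := eventually_atTop.1 (ENNReal.tendsto_nhds_zero.1 hv ε hε)
  have hrow n : {a | ¬u n a ≤ ε}.Finite :=
    eventually_cofinite.1 (ENNReal.tendsto_nhds_zero.1 (hu n) ε hε)
  refine eventually_cofinite.2 <|
    ((Set.finite_lt_nat N).biUnion fun n _ => (hrow n).image (Prod.mk n)).subset ?_
  rintro ⟨n, a⟩ h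
  have hn : n < N := by
    by_contra! hn
    exact h ((huv n a).trans (hN n hn))
  exact Set.mem_biUnion hn ⟨a, h, rfl⟩

namespace MeasureTheory

variable {Ω : Type*} [MeasurableSpace Ω] {μ : Measure Ω}

/-- Stronger than `NoAtoms`, which only asks singletons to be null. -/
def Measure.Nonatomic (μ : Measure Ω) : Prop :=
  ∀ s, MeasurableSet s → 0 < μ s → ∃ t ⊆ s, MeasurableSet t ∧ 0 < μ t ∧ μ t < μ s

lemma exists_mem_measure_compl_eq_zero {𝒟 : Set (Set Ω)} (hne : 𝒟.Nonempty)
    (hunion : ∀ C : ℕ → Set Ω, (∀ n, C n ∈ 𝒟) → ⋃ n, C n ∈ 𝒟)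
    (hgrow : ∀ C ∈ 𝒟, μ Cᶜ ≠ 0 → ∃ D ∈ 𝒟, μ C < μ D) : ∃ C ∈ 𝒟, μ Cᶜ = 0 := by
  -- the union of a sequence in `𝒟` whose measures approach the supremum cannot be enlarged
  obtain ⟨u, -, hu, hu𝒟⟩ := exists_seq_tendsto_sSup (hne.image μ) (OrderTop.bddAbove _)
  choose C hC𝒟 hCu using hu𝒟
  have hmax (D : Set Ω) (hD : D ∈ 𝒟) : μ D ≤ μ (⋃ n, C n) :=
    (le_sSup (Set.mem_image_of_mem μ hD)).trans <|
      le_of_tendsto' hu fun n => hCu n ▸ measure_mono (Set.subset_iUnion C n)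
  by_contra! h
  obtain ⟨D, hD, hlt⟩ := hgrow _ (hunion C hC𝒟) (h _ (hunion C hC𝒟))
  exact (hmax D hD).not_gt hlt

lemma tendstoInMeasure_zero_of_tendsto_measure_support {ι E : Type*} [PseudoEMetricSpace E]
    [Zero E] {l : Filter ι} {f : ι → Ω → E}
    (hf : Tendsto (fun i => μ (Function.support (f i))) l (𝓝 0)) :
    TendstoInMeasure μ f l 0 := by
  refine fun ε hε => tendsto_of_tendsto_of_tendsto_of_le_of_le tendsto_const_nhds hf
    (fun _ => zero_le) fun i => measure_mono fun ω hω hω0 => ?_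
  simp [hω0, hε.ne'] at hω

namespace Measure.Nonatomic

lemma exists_subset_two_mul_measure_le (hμ : μ.Nonatomic) {s : Set Ω} (hs : MeasurableSet s)
    (hs_pos : 0 < μ s) : ∃ t ⊆ s, MeasurableSet t ∧ 0 < μ t ∧ 2 * μ t ≤ μ s := by
  obtain ⟨u, hus, hu, hu_pos, hu_lt⟩ := hμ s hs hs_pos
  have hsplit : μ (s \ u) + μ u = μ s := by
    simpa [Set.inter_eq_self_of_subset_right hus] using measure_sdiff_add_inter (μ := μ) s hu
  rcases le_total (μ u) (μ (s \ u)) with hle | hle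
  · refine ⟨u, hus, hu, hu_pos, ?_⟩
    calc 2 * μ u = μ u + μ u := two_mul _
      _ ≤ μ (s \ u) + μ u := by gcongr
      _ = μ s := hsplit
  · refine ⟨s \ u, Set.sdiff_subset, hs.diff hu, pos_iff_ne_zero.2 fun h0 => ?_, ?_⟩
    · rw [h0, zero_add] at hsplit
      exact hu_lt.ne hsplit
    · calc 2 * μ (s \ u) = μ (s \ u) + μ (s \ u) := two_mul _
        _ ≤ μ (s \ u) + μ u := by gcongr
        _ = μ s := hsplit

lemma exists_subset_measure_le (hμ : μ.Nonatomic) {s : Set Ω} (hs : MeasurableSet s)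
    (hs_pos : 0 < μ s) (hs_fin : μ s ≠ ∞) {ε : ℝ≥0∞} (hε : 0 < ε) :
    ∃ t ⊆ s, MeasurableSet t ∧ 0 < μ t ∧ μ t ≤ ε := by
  have halving (k : ℕ) : ∃ t ⊆ s, MeasurableSet t ∧ 0 < μ t ∧ 2 ^ k * μ t ≤ μ s := by
    induction k with
    | zero => exact ⟨s, subset_rfl, hs, hs_pos, by simp⟩
    | succ k ih =>
      obtain ⟨t, hts, ht, ht_pos, hkt⟩ := ih
      obtain ⟨u, hut, hu, hu_pos, htu⟩ := hμ.exists_subset_two_mul_measure_le ht ht_pos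
      refine ⟨u, hut.trans hts, hu, hu_pos, ?_⟩
      calc 2 ^ (k + 1) * μ u = 2 ^ k * (2 * μ u) := by ring
        _ ≤ 2 ^ k * μ t := by gcongr
        _ ≤ μ s := hkt
  have hsmall : Tendsto (fun k : ℕ => μ s / 2 ^ k) atTop (𝓝 0) := by
    simpa [div_eq_mul_inv, ENNReal.inv_pow] using ENNReal.Tendsto.const_mul
      (ENNReal.tendsto_pow_atTop_nhds_zero_of_lt_one (by norm_num : (2⁻¹ : ℝ≥0∞) < 1))
      (Or.inr hs_fin)
  obtain ⟨k, hk⟩ := (ENNReal.tendsto_nhds_zero.1 hsmall ε hε).exists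
  obtain ⟨t, hts, ht, ht_pos, hkt⟩ := halving k
  have ht_le : μ t ≤ μ s / 2 ^ k := by
    rwa [ENNReal.le_div_iff_mul_le (by simp) (by simp), mul_comm]
  exact ⟨t, hts, ht, ht_pos, ht_le.trans hk⟩

lemma exists_ae_partition_measure_le [IsFiniteMeasure μ] (hμ : μ.Nonatomic) {ε : ℝ≥0∞}
    (hε : 0 < ε) :
    ∃ A : ℕ → Set Ω, (∀ k, MeasurableSet (A k)) ∧ (∀ k, μ (A k) ≤ ε) ∧
      Pairwise (Function.onFun Disjoint A) ∧ ∀ᵐ ω ∂μ, ∃ k, ω ∈ A k := by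
  let 𝒟 : Set (Set Ω) :=
    {C | ∃ A : ℕ → Set Ω, (∀ k, MeasurableSet (A k) ∧ μ (A k) ≤ ε) ∧ ⋃ k, A k = C}
  have hunion (C : ℕ → Set Ω) (hC : ∀ n, C n ∈ 𝒟) : ⋃ n, C n ∈ 𝒟 := by
    choose A hA hAC using hC
    refine ⟨fun m => A (Nat.unpair m).1 (Nat.unpair m).2, fun m => hA _ _, ?_⟩
    simp_rw [← hAC]
    exact (Nat.pairEquiv.symm.iSup_comp (g := fun p => A p.1 p.2)).trans (Set.iUnion_prod' _)
  have hgrow (C : Set Ω) (hC : C ∈ 𝒟) (hC_compl : μ Cᶜ ≠ 0) : ∃ D ∈ 𝒟, μ C < μ D := by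
    obtain ⟨A, hA, rfl⟩ := hC
    have hC_meas : MeasurableSet (⋃ k, A k) := .iUnion fun k => (hA k).1
    obtain ⟨t, ht_sub, ht, ht_pos, htε⟩ := hμ.exists_subset_measure_le hC_meas.compl
      (pos_iff_ne_zero.2 hC_compl) (measure_ne_top _ _) hε
    refine ⟨t ∪ ⋃ k, A k, ⟨fun k => Nat.casesOn (motive := fun _ => Set Ω) k t A, fun k => ?_,
      (sup_iSup_nat_succ _).symm⟩, ?_⟩
    · cases k
      exacts [⟨ht, htε⟩, hA _]
    · rw [measure_union (Set.subset_compl_iff_disjoint_right.1 ht_sub) hC_meas, add_comm]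
      exact ENNReal.lt_add_right (measure_ne_top _ _) ht_pos.ne'
  obtain ⟨_, ⟨A, hA, rfl⟩, hnull⟩ :=
    exists_mem_measure_compl_eq_zero (𝒟 := 𝒟) ⟨∅, fun _ => ∅, by simp, by simp⟩ hunion hgrow
  refine ⟨disjointed A, .disjointed fun k => (hA k).1,
    fun k => (measure_mono (disjointed_subset A k)).trans (hA k).2, disjoint_disjointed A, ?_⟩
  filter_upwards [mem_ae_iff.2 hnull] with ω hω
  rwa [← iUnion_disjointed, Set.mem_iUnion] at hω

lemma exists_seq_tendsto_measure_zero_frequently_mem [IsFiniteMeasure μ] (hμ : μ.Nonatomic) :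
    ∃ B : ℕ → Set Ω, (∀ m, MeasurableSet (B m)) ∧ Tendsto (fun m => μ (B m)) atTop (𝓝 0) ∧
      ∀ᵐ ω ∂μ, ∃ᶠ m in atTop, ω ∈ B m := by
  -- row `n` has pieces of measure `≤ n⁻¹` (with `0⁻¹ = ∞`)
  choose A hA hAε hA_disj hA_cover using fun n : ℕ =>
    hμ.exists_ae_partition_measure_le (ENNReal.inv_pos.2 (ENNReal.natCast_ne_top n))
  refine ⟨fun m => A (Nat.unpair m).1 (Nat.unpair m).2, fun m => hA _ _, ?_, ?_⟩
  · have hrow n : Tendsto (fun k => μ (A n k)) Filter.cofinite (𝓝 0) := by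
      refine ENNReal.tendsto_cofinite_zero_of_tsum_ne_top ?_
      rw [← measure_iUnion (hA_disj n) (hA n)]
      exact measure_ne_top _ _
    have := (ENNReal.tendsto_uncurry_cofinite_nhds_zero hrow ENNReal.tendsto_inv_nat_nhds_zero
      hAε).comp Nat.pairEquiv.symm.injective.tendsto_cofinite
    rwa [Nat.cofinite_eq_atTop] at this
  · filter_upwards [ae_all_iff.2 hA_cover] with ω hω
    choose k hk using hω
    refine frequently_atTop.2 fun N => ⟨Nat.pair N (k N), Nat.left_le_pair _ _, ?_⟩
    simpa using hk N

end Measure.Nonatomic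

end MeasureTheory

/-- On a nonatomic finite measure space of positive measure there is a sequence of
nonnegative measurable functions converging to `0` in measure which does not
`(o)`-converge to `0` (commutative core of Proposition 5.3 of the paper). -/
theorem exists_tendstoInMeasure_not_order_convergent
    {Ω : Type*} [MeasurableSpace Ω] {μ : Measure Ω} [IsFiniteMeasure μ]
    (hnonatomic : ∀ s : Set Ω, MeasurableSet s → 0 < μ s →
      ∃ t ⊆ s, MeasurableSet t ∧ 0 < μ t ∧ μ t < μ s)
    (hpos : 0 < μ Set.univ) :
    ∃ f : ℕ → Ω → ℝ, (∀ n, Measurable (f n)) ∧ (∀ n ω, 0 ≤ f n ω) ∧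
      TendstoInMeasure μ f atTop 0 ∧
      ¬ ∃ S : ℕ → Ω → ℝ, (∀ n, Measurable (S n)) ∧
          (∀ n, ∀ᵐ ω ∂μ, S (n + 1) ω ≤ S n ω) ∧
          (∀ᵐ ω ∂μ, Tendsto (fun n => S n ω) atTop (𝓝 0)) ∧
          (∀ n, ∀ᵐ ω ∂μ, f n ω ≤ S n ω) := by
  obtain ⟨B, hB, hμB, hB_freq⟩ :=
    Measure.Nonatomic.exists_seq_tendsto_measure_zero_frequently_mem hnonatomic
  set f : ℕ → Ω → ℝ := fun m => (B m).indicator 1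
  have hf_nonneg (m : ℕ) (ω : Ω) : 0 ≤ f m ω := Set.indicator_nonneg (fun _ _ => zero_le_one) ω
  refine ⟨f, fun m => measurable_one.indicator (hB m), hf_nonneg,
    tendstoInMeasure_zero_of_tendsto_measure_support <|
      tendsto_of_tendsto_of_tendsto_of_le_of_le tendsto_const_nhds hμB (fun _ => zero_le)
        fun m => measure_mono Set.support_indicator_subset, ?_⟩
  rintro ⟨S, -, -, hS_lim, hfS⟩
  have hf_lim : ∀ᵐ ω ∂μ, Tendsto (fun m => f m ω) atTop (𝓝 0) := by
    filter_upwards [hS_lim, ae_all_iff.2 hfS] with ω hSω hfSω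
    exact tendsto_of_tendsto_of_tendsto_of_le_of_le tendsto_const_nhds hSω (hf_nonneg · ω) hfSω
  have : (ae μ).NeBot := ae_neBot.2 (Measure.measure_univ_pos.1 hpos)
  obtain ⟨ω, hfω, hBω⟩ := (hf_lim.and hB_freq).exists
  obtain ⟨m, hm_lt, hm_mem⟩ := ((hfω.eventually_lt_const one_pos).and_frequently hBω).exists
  simp [f, hm_mem] at hm_lt
end

section
/- Let (Ω, μ) be a measure space which is purely atomic: there is a countable measurable partition (A_i)_{i ∈ ℕ} of Ω (up to a μ-null set) such that each A_i is either μ-null or an atom of μ (μ(A_i) > 0 and every measurable subset of A_i has measure 0 or μ(A_i)). If (f_n) is a sequence of real-valued measurable functions with f_n → 0 in measure μ, then (f_n) (o)-converges to 0: there exists a sequence (S_n) of measurable functions with S_{n+1} ≤ S_n a.e. for all n, S_n → 0 a.e., and |f_n| ≤ S_n a.e. for all n. -/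
/-!
An atom `A` cannot be split, so once `μ {ε ≤ |f n|} < μ A` the set `A ∩ {ε ≤ |f n|}` is null.
Hence on each atom convergence in measure forces, for every `ε`, eventually null exceptional sets,
which is a.e. convergence; on a purely atomic space this gives `f n → 0` a.e. An a.e. null
sequence is `(o)`-convergent, dominated by its tail suprema `S n = ⨆ m ≥ n, |f m|`.
-/

open MeasureTheory Filter Topology Set
open scoped ENNReal

namespace MeasureTheory

variable {Ω E : Type*} [MeasurableSpace Ω] {μ : Measure Ω} {A : Set Ω}

def Measure.IsAtom (μ : Measure Ω) (A : Set Ω) : Prop :=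
  0 < μ A ∧ ∀ t ⊆ A, MeasurableSet t → μ t = 0 ∨ μ t = μ A

theorem Measure.IsAtom.measure_inter_eq_zero (hA : μ.IsAtom A) (hAm : MeasurableSet A)
    {s : Set Ω} (hs : μ s < μ A) : μ (A ∩ s) = 0 := by
  -- `s` need not be measurable, so apply the atom condition to a measurable hull of `A ∩ s` in `A`
  set t := A ∩ toMeasurable μ (A ∩ s)
  have ht : μ t = μ (A ∩ s) :=
    le_antisymm ((measure_mono inter_subset_right).trans_eq (measure_toMeasurable _))
      (measure_mono (subset_inter inter_subset_left (subset_toMeasurable _ _)))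
  rcases hA.2 t inter_subset_left (hAm.inter (measurableSet_toMeasurable _ _)) with h | h
  · rwa [← ht]
  · exact absurd (ht.symm.trans h) ((measure_mono inter_subset_right).trans_lt hs).ne

theorem TendstoInMeasure.eventually_measure_inter_eq_zero {ι : Type*} [EDist E] {l : Filter ι}
    {f : ι → Ω → E} {g : Ω → E} (hfg : TendstoInMeasure μ f l g) (hA : μ.IsAtom A)
    (hAm : MeasurableSet A) {ε : ℝ≥0∞} (hε : 0 < ε) :
    ∀ᶠ i in l, μ (A ∩ {x | ε ≤ edist (f i x) (g x)}) = 0 :=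
  ((hfg ε hε).eventually_lt_const hA.1).mono fun _ hi => hA.measure_inter_eq_zero hAm hi

theorem ae_tendsto_of_eventually_measure_eq_zero [PseudoEMetricSpace E] {f : ℕ → Ω → E}
    {g : Ω → E} (h : ∀ ε : ℝ≥0∞, 0 < ε → ∀ᶠ n in atTop, μ {x | ε ≤ edist (f n x) (g x)} = 0) :
    ∀ᵐ x ∂μ, Tendsto (fun n => f n x) atTop (𝓝 (g x)) := by
  choose N hN using fun k : ℕ =>
    eventually_atTop.1 (h (k : ℝ≥0∞)⁻¹ (ENNReal.inv_pos.2 (ENNReal.natCast_ne_top k)))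
  have hsmall : ∀ᵐ x ∂μ, ∀ k n, N k ≤ n → edist (f n x) (g x) < (k : ℝ≥0∞)⁻¹ := by
    refine ae_all_iff.2 fun k => ae_all_iff.2 fun n => ?_
    by_cases hn : N k ≤ n
    · filter_upwards [measure_eq_zero_iff_ae_notMem.1 (hN k n hn)] with x hx _
      exact not_le.1 hx
    · exact Eventually.of_forall fun _ hn' => absurd hn' hn
  filter_upwards [hsmall] with x hx
  refine EMetric.tendsto_atTop.2 fun ε hε => ?_
  obtain ⟨k, hk⟩ := ENNReal.exists_inv_nat_lt hε.ne'
  exact ⟨N k, fun n hn => (hx k n hn).trans hk⟩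

theorem TendstoInMeasure.ae_tendsto_of_isAtom [PseudoEMetricSpace E] {f : ℕ → Ω → E}
    {g : Ω → E} (hfg : TendstoInMeasure μ f atTop g) (hA : μ.IsAtom A) (hAm : MeasurableSet A) :
    ∀ᵐ x ∂μ, x ∈ A → Tendsto (fun n => f n x) atTop (𝓝 (g x)) := by
  rw [← ae_restrict_iff' hAm]
  refine ae_tendsto_of_eventually_measure_eq_zero fun ε hε => ?_
  filter_upwards [hfg.eventually_measure_inter_eq_zero hA hAm hε] with n hn
  rwa [Measure.restrict_apply' hAm, inter_comm]

theorem TendstoInMeasure.ae_tendsto_of_atomic [PseudoEMetricSpace E] {ι : Type*} [Countable ι]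
    {A : ι → Set Ω} (hA : ∀ i, MeasurableSet (A i)) (hcover : ∀ᵐ x ∂μ, ∃ i, x ∈ A i)
    (hatom : ∀ i, μ (A i) = 0 ∨ μ.IsAtom (A i)) {f : ℕ → Ω → E} {g : Ω → E}
    (hfg : TendstoInMeasure μ f atTop g) :
    ∀ᵐ x ∂μ, Tendsto (fun n => f n x) atTop (𝓝 (g x)) := by
  have hpiece : ∀ i, ∀ᵐ x ∂μ, x ∈ A i → Tendsto (fun n => f n x) atTop (𝓝 (g x)) := fun i =>
    (hatom i).elim
      (fun h0 => (measure_eq_zero_iff_ae_notMem.1 h0).mono fun _ hx hxA => absurd hxA hx)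
      (hfg.ae_tendsto_of_isAtom · (hA i))
  filter_upwards [hcover, ae_all_iff.2 hpiece] with x ⟨i, hi⟩ hx using hx i hi

end MeasureTheory

section TailSup

variable {u : ℕ → ℝ}

noncomputable def tailSupAbs (u : ℕ → ℝ) (n : ℕ) : ℝ :=
  ⨆ m, |u (n + m)|

theorem bddAbove_range_abs_add_s9 (hu : BddAbove (range fun m => |u m|)) (n : ℕ) :
    BddAbove (range fun m => |u (n + m)|) :=
  hu.mono (range_comp_subset_range (n + ·) fun m => |u m|)

theorem abs_le_tailSupAbs (hu : BddAbove (range fun m => |u m|)) (n : ℕ) :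
    |u n| ≤ tailSupAbs u n :=
  le_ciSup (bddAbove_range_abs_add_s9 hu n) 0

theorem tailSupAbs_succ_le (hu : BddAbove (range fun m => |u m|)) (n : ℕ) :
    tailSupAbs u (n + 1) ≤ tailSupAbs u n :=
  ciSup_le fun m => by
    rw [add_right_comm]
    exact le_ciSup (bddAbove_range_abs_add_s9 hu n) (m + 1)

theorem tendsto_tailSupAbs (hu : Tendsto u atTop (𝓝 0)) :
    Tendsto (tailSupAbs u) atTop (𝓝 0) := by
  have habs : Tendsto (fun m => |u m|) atTop (𝓝 0) := by simpa using hu.abs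
  refine tendsto_order.2 ⟨fun a ha => Eventually.of_forall fun n => ?_, fun b hb => ?_⟩
  · exact ha.trans_le ((abs_nonneg _).trans (abs_le_tailSupAbs habs.bddAbove_range n))
  · obtain ⟨c, hc, hcb⟩ := exists_between hb
    obtain ⟨N, hN⟩ := eventually_atTop.1 (habs.eventually_lt_const hc)
    filter_upwards [eventually_ge_atTop N] with n hn
    exact (ciSup_le fun m => (hN (n + m) (by omega)).le).trans_lt hcb

end TailSup

theorem exists_antitone_majorant_of_ae_tendsto_zero {Ω : Type*} [MeasurableSpace Ω]
    {μ : Measure Ω} {f : ℕ → Ω → ℝ} (hf : ∀ n, Measurable (f n))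
    (hlim : ∀ᵐ x ∂μ, Tendsto (fun n => f n x) atTop (𝓝 0)) :
    ∃ S : ℕ → Ω → ℝ, (∀ n, Measurable (S n)) ∧
      (∀ n, ∀ᵐ x ∂μ, S (n + 1) x ≤ S n x) ∧
      (∀ᵐ x ∂μ, Tendsto (fun n => S n x) atTop (𝓝 0)) ∧
      (∀ n, ∀ᵐ x ∂μ, |f n x| ≤ S n x) := by
  have hbdd : ∀ᵐ x ∂μ, BddAbove (range fun m => |f m x|) :=
    hlim.mono fun _ hx => hx.abs.bddAbove_range
  refine ⟨fun n x => tailSupAbs (fun m => f m x) n,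
    fun n => Measurable.iSup fun m => (hf (n + m)).abs, fun n => ?_, ?_, fun n => ?_⟩
  · filter_upwards [hbdd] with x hx using tailSupAbs_succ_le hx n
  · filter_upwards [hlim] with x hx using tendsto_tailSupAbs hx
  · filter_upwards [hbdd] with x hx using abs_le_tailSupAbs hx n

theorem order_convergent_of_tendstoInMeasure_of_atomic_general
    {Ω : Type*} [MeasurableSpace Ω] {μ : Measure Ω}
    (A : ℕ → Set Ω) (hA : ∀ i, MeasurableSet (A i))
    (hcover : μ (Set.univ \ ⋃ i, A i) = 0)
    (hatom : ∀ i, μ (A i) = 0 ∨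
      (0 < μ (A i) ∧ ∀ t ⊆ A i, MeasurableSet t → μ t = 0 ∨ μ t = μ (A i)))
    (f : ℕ → Ω → ℝ) (hf : ∀ n, Measurable (f n))
    (hconv : TendstoInMeasure μ f atTop 0) :
    ∃ S : ℕ → Ω → ℝ, (∀ n, Measurable (S n)) ∧
      (∀ n, ∀ᵐ ω ∂μ, S (n + 1) ω ≤ S n ω) ∧
      (∀ᵐ ω ∂μ, Tendsto (fun n => S n ω) atTop (𝓝 0)) ∧
      (∀ n, ∀ᵐ ω ∂μ, |f n ω| ≤ S n ω) := by
  have hcover' : ∀ᵐ ω ∂μ, ∃ i, ω ∈ A i := by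
    rw [ae_iff]
    simpa [← Set.compl_eq_univ_sdiff, Set.compl_def] using hcover
  exact exists_antitone_majorant_of_ae_tendsto_zero hf (hconv.ae_tendsto_of_atomic hA hcover' hatom)

/-- On a purely atomic measure space (a countable measurable partition, up to a null
set, into sets that are null or atoms), every sequence of measurable functions that
converges to `0` in measure also `(o)`-converges to `0` (commutative instance of
Proposition 5.3 (i) ⇒ (ii) of the paper). -/
theorem order_convergent_of_tendstoInMeasure_of_atomic
    {Ω : Type*} [MeasurableSpace Ω] {μ : Measure Ω}
    (A : ℕ → Set Ω) (hA : ∀ i, MeasurableSet (A i))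
    (hdisj : Pairwise (Function.onFun Disjoint A))
    (hcover : μ (Set.univ \ ⋃ i, A i) = 0)
    (hatom : ∀ i, μ (A i) = 0 ∨
      (0 < μ (A i) ∧ ∀ t ⊆ A i, MeasurableSet t → μ t = 0 ∨ μ t = μ (A i)))
    (f : ℕ → Ω → ℝ) (hf : ∀ n, Measurable (f n))
    (hconv : TendstoInMeasure μ f atTop 0) :
    ∃ S : ℕ → Ω → ℝ, (∀ n, Measurable (S n)) ∧
      (∀ n, ∀ᵐ ω ∂μ, S (n + 1) ω ≤ S n ω) ∧
      (∀ᵐ ω ∂μ, Tendsto (fun n => S n ω) atTop (𝓝 0)) ∧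
      (∀ n, ∀ᵐ ω ∂μ, |f n ω| ≤ S n ω) :=
  order_convergent_of_tendstoInMeasure_of_atomic_general A hA hcover hatom f hf hconv
end

section
/- Let (Ω, μ) be a σ-finite measure space with μ(Ω) = ∞. Then there exists an antitone sequence (B_n) of measurable sets with μ(B_n) = ∞ for every n such that the indicator functions χ_{B_n} converge to 0 in measure with respect to μ.restrict A for every measurable set A with μ A < ∞, but the sequence (χ_{B_n}) does not converge to 0 in measure μ (globally). -/
open MeasureTheory Filter Topology Set
open scoped ENNReal

/-! Take `B n` to be the complement of the `n`-th spanning set of `μ`. Since `μ` is infinite and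
the spanning sets have finite measure, every `B n` has infinite measure, so `χ_{B n}` cannot tend
to `0` in measure. On a set `A` of finite measure, however, `μ.restrict A` is finite and the `B n`
decrease to `∅`, so `μ (A ∩ B n) → 0` by continuity from above. Both halves rest on the fact that
`χ_B` is at distance `≥ ε` from `0` exactly on `B` when `ε ≤ 1`, so that convergence in measure of
indicators to `0` is convergence of the measures of the sets to `0`. -/

lemma measure_compl_eq_top_of_ne_top {α : Type*} [MeasurableSpace α] {μ : Measure α}
    (hμ : μ univ = ∞) {s : Set α} (hs : μ s ≠ ∞) : μ sᶜ = ∞ := by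
  by_contra h
  exact (ENNReal.add_lt_top.2 ⟨hs.lt_top, lt_top_iff_ne_top.2 h⟩).not_ge
    (hμ ▸ measure_univ_le_add_compl s)

lemma tendsto_measure_compl_spanningSets {α : Type*} [MeasurableSpace α] (μ : Measure α)
    [SigmaFinite μ] (ν : Measure α) [IsFiniteMeasure ν] :
    Tendsto (fun n => ν (spanningSets μ n)ᶜ) atTop (𝓝 0) := by
  have h := tendsto_measure_iInter_atTop (μ := ν)
    (fun n => (measurableSet_spanningSets μ n).compl.nullMeasurableSet)
    (fun m n hmn => compl_subset_compl.2 (monotone_spanningSets μ hmn)) ⟨0, measure_ne_top ν _⟩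
  rwa [← compl_iUnion, iUnion_spanningSets, compl_univ, measure_empty] at h

lemma setOf_le_edist_indicator_one_zero {α : Type*} (B : Set α) {ε : ℝ≥0∞} (hε : 0 < ε) :
    {x | ε ≤ edist (B.indicator (fun _ => (1 : ℝ)) x) 0} = if ε ≤ 1 then B else ∅ := by
  ext x
  by_cases hx : x ∈ B <;> split_ifs with h <;> simp [hx, h, hε.ne']

theorem tendstoInMeasure_indicator_one_zero_iff {α ι : Type*} [MeasurableSpace α]
    {μ : Measure α} {l : Filter ι} {B : ι → Set α} :
    TendstoInMeasure μ (fun i => (B i).indicator fun _ => (1 : ℝ)) l 0 ↔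
      Tendsto (fun i => μ (B i)) l (𝓝 0) := by
  simp only [TendstoInMeasure, Pi.zero_apply]
  constructor
  · intro h
    simpa only [setOf_le_edist_indicator_one_zero _ one_pos, le_refl, if_true] using h 1 one_pos
  · intro h ε hε
    simp only [setOf_le_edist_indicator_one_zero _ hε]
    split_ifs
    · exact h
    · simpa using tendsto_const_nhds

/-- On a σ-finite measure space of infinite measure there is an antitone sequence of
measurable sets of infinite measure whose indicator functions converge to `0` in
measure on every set of finite measure but not globally in measure (commutative
content of Proposition 3.2 and Corollary 4.3(i) of the paper). -/
theorem exists_antitone_sets_locally_but_not_globally_tendstoInMeasure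
    {Ω : Type*} [MeasurableSpace Ω] {μ : Measure Ω} [SigmaFinite μ]
    (hμ : μ Set.univ = ∞) :
    ∃ B : ℕ → Set Ω, (∀ n, MeasurableSet (B n)) ∧ Antitone B ∧
      (∀ n, μ (B n) = ∞) ∧
      (∀ A : Set Ω, MeasurableSet A → μ A < ∞ →
        TendstoInMeasure (μ.restrict A)
          (fun n => (B n).indicator (fun _ => (1 : ℝ))) atTop 0) ∧
      ¬ TendstoInMeasure μ (fun n => (B n).indicator (fun _ => (1 : ℝ))) atTop 0 := by
  have hB_top : ∀ n, μ (spanningSets μ n)ᶜ = ∞ := fun n =>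
    measure_compl_eq_top_of_ne_top hμ (measure_spanningSets_lt_top μ n).ne
  refine ⟨fun n => (spanningSets μ n)ᶜ, fun n => (measurableSet_spanningSets μ n).compl,
    fun m n hmn => compl_subset_compl.2 (monotone_spanningSets μ hmn), hB_top,
    fun A _ hA => ?_, ?_⟩
  · have : IsFiniteMeasure (μ.restrict A) := isFiniteMeasure_restrict.2 hA.ne
    exact tendstoInMeasure_indicator_one_zero_iff.2 (tendsto_measure_compl_spanningSets μ _)
  · rw [tendstoInMeasure_indicator_one_zero_iff, funext hB_top, tendsto_const_nhds_iff]
    exact ENNReal.top_ne_zero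
end

section
/- Let (Ω, μ) be a σ-finite measure space, ι a nonempty directed preorder, and g : ι → (Ω →ₘ[μ] ℝ) an antitone net in the a.e. order such that 0 is the greatest lower bound of the range of g (IsGLB (Set.range g) 0). Then there exists a monotone sequence u : ℕ → ι such that for μ-a.e. ω, the sequence g(u n) ω tends to 0 as n → ∞. -/
open MeasureTheory Filter Topology

/-!
Truncate to `min (g i) 1` and pass to the finite measure `μ.toFinite`, which has the same null
sets as `μ`. The integrals `∫ min (g i) 1` then form a bounded antitone net of reals, and by
directedness there is a monotone sequence of indices `u` along which they tend to their infimum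
`c`. The decreasing limit `F` of `min (g (u n)) 1` has `∫ F = c`, while for every `i` the
integrals of `min (g (u n)) (g i)` stay above `c`; hence `∫ min F (g i) ≥ ∫ F`, i.e. `F ≤ g i`
a.e. So `F` is a lower bound of the net and must vanish a.e.
-/

theorem exists_monotone_forall_le {ι : Type*} [Preorder ι] [IsDirectedOrder ι] (a : ℕ → ι) :
    ∃ u : ℕ → ι, Monotone u ∧ ∀ n, a n ≤ u n := by
  choose c hleft hright using exists_ge_ge (α := ι)
  let u : ℕ → ι := fun n => Nat.rec (a 0) (fun n x => c x (a (n + 1))) n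
  refine ⟨u, monotone_nat_of_le_succ fun n => hleft _ _, fun n => ?_⟩
  cases n with
  | zero => exact le_rfl
  | succ n => exact hright _ _

theorem Filter.Tendsto.exists_monotone_seq {ι α : Type*} [Preorder ι] [IsDirectedOrder ι]
    [Nonempty ι] {f : ι → α} {l : Filter α} [l.IsCountablyGenerated] (hf : Tendsto f atTop l) :
    ∃ u : ℕ → ι, Monotone u ∧ Tendsto (f ∘ u) atTop l := by
  obtain ⟨B, hB⟩ := l.exists_antitone_basis
  choose a ha using fun n => eventually_atTop.1 (hf (hB.mem n))
  obtain ⟨u, hu, hau⟩ := exists_monotone_forall_le a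
  exact ⟨u, hu, hB.tendsto_right_iff.2 fun n _ =>
    eventually_atTop.2 ⟨n, fun m hmn => ha n _ ((hau n).trans (hu hmn))⟩⟩

theorem tendsto_zero_of_iInf_min_one_nonpos {x : ℕ → ℝ} (hx : Antitone x) (hx0 : ∀ n, 0 ≤ x n)
    (h : ⨅ n, min (x n) 1 ≤ 0) : Tendsto x atTop (𝓝 0) := by
  refine tendsto_order.2 ⟨fun a ha => .of_forall fun n => ha.trans_le (hx0 n), fun a ha => ?_⟩
  obtain ⟨n, hn⟩ := exists_lt_of_ciInf_lt (h.trans_lt (lt_min ha one_pos))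
  have hxn : x n < a := lt_of_not_ge fun hle => hn.not_ge (min_le_min_right 1 hle)
  exact eventually_atTop.2 ⟨n, fun m hm => (hx hm).trans_lt hxn⟩

theorem MeasureTheory.AEEqFun.ae_le_of_isGLB {Ω β ι : Type*} [MeasurableSpace Ω] {μ : Measure Ω}
    [TopologicalSpace β] [Preorder β] {g : ι → Ω →ₘ[μ] β} {G : Ω →ₘ[μ] β}
    (hG : IsGLB (Set.range g) G) {f : Ω → β} (hf : AEStronglyMeasurable f μ)
    (hfg : ∀ i, f ≤ᵐ[μ] g i) : f ≤ᵐ[μ] G := by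
  have hmk : AEEqFun.mk f hf ≤ G := hG.2 <| by
    rintro _ ⟨i, rfl⟩
    rw [← AEEqFun.coeFn_le]
    filter_upwards [AEEqFun.coeFn_mk f hf, hfg i] with ω h1 h2
    rw [h1]
    exact h2
  filter_upwards [AEEqFun.coeFn_mk f hf, AEEqFun.coeFn_le.2 hmk] with ω h1 h2
  rwa [← h1]

section

variable {Ω : Type*} [MeasurableSpace Ω] {μ : Measure Ω}

theorem ae_antitone_of_forall_ae_le {f : ℕ → Ω → ℝ}
    (hf : ∀ ⦃m n⦄, m ≤ n → f n ≤ᵐ[μ] f m) : ∀ᵐ ω ∂μ, Antitone fun n => f n ω := by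
  filter_upwards [ae_all_iff.2 fun n => hf (Nat.le_succ n)] with ω hω
  exact antitone_nat_of_succ_le hω

theorem ae_le_of_integral_le_integral_min {f g : Ω → ℝ} (hf : Integrable f μ)
    (hg : Integrable g μ) (hfg : ∫ ω, f ω ∂μ ≤ ∫ ω, min (f ω) (g ω) ∂μ) : f ≤ᵐ[μ] g := by
  have hmin : Integrable (fun ω => min (f ω) (g ω)) μ := hf.inf hg
  have heq : (fun ω => min (f ω) (g ω)) =ᵐ[μ] f :=
    (integral_eq_iff_of_ae_le hmin hf (.of_forall fun ω => min_le_left _ _)).1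
      ((integral_mono hmin hf fun ω => min_le_left _ _).antisymm hfg)
  filter_upwards [heq] with ω hω
  exact hω ▸ min_le_right _ _

end

section DirectedFamily

variable {Ω ι : Type*} [MeasurableSpace Ω] [Preorder ι] [IsDirectedOrder ι]
  {h : ι → Ω → ℝ} {C : ℝ}

theorem ae_iInf_le_of_tendsto_integral {ν : Measure Ω} [IsFiniteMeasure ν]
    (hmeas : ∀ i, AEStronglyMeasurable (h i) ν) (hC : ∀ i, ∀ᵐ ω ∂ν, ‖h i ω‖ ≤ C)
    (hanti : ∀ ⦃i j⦄, i ≤ j → h j ≤ᵐ[ν] h i) {u : ℕ → ι} (hu : Monotone u) {c : ℝ}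
    (hc : ∀ i, c ≤ ∫ ω, h i ω ∂ν) (hlim : Tendsto (fun n => ∫ ω, h (u n) ω ∂ν) atTop (𝓝 c))
    (i : ι) : ∀ᵐ ω ∂ν, ⨅ n, h (u n) ω ≤ h i ω := by
  set F : Ω → ℝ := fun ω => ⨅ n, h (u n) ω
  have hint : ∀ i, Integrable (h i) ν := fun i => (integrable_const C).mono' (hmeas i) (hC i)
  have hCu : ∀ᵐ ω ∂ν, ∀ n, ‖h (u n) ω‖ ≤ C := ae_all_iff.2 fun n => hC (u n)
  have hF : ∀ᵐ ω ∂ν, Tendsto (fun n => h (u n) ω) atTop (𝓝 (F ω)) := by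
    filter_upwards [ae_antitone_of_forall_ae_le fun m n hmn => hanti (hu hmn), hCu]
      with ω hω hωC
    exact tendsto_atTop_ciInf hω ⟨-C, by
      rintro _ ⟨n, rfl⟩
      exact neg_le_of_abs_le (hωC n)⟩
  have hFint : Integrable F ν := by
    refine (integrable_const C).mono'
      (aestronglyMeasurable_of_tendsto_ae _ (fun n => hmeas (u n)) hF) ?_
    filter_upwards [hF, hCu] with ω hω hωC
    exact le_of_tendsto' hω.norm hωC
  have hF_eq : ∫ ω, F ω ∂ν = c := tendsto_nhds_unique
    (tendsto_integral_of_dominated_convergence _ (fun n => hmeas (u n)) (integrable_const C)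
      (fun n => hC (u n)) hF) hlim
  have hmin_lim : Tendsto (fun n => ∫ ω, min (h (u n) ω) (h i ω) ∂ν) atTop
      (𝓝 (∫ ω, min (F ω) (h i ω) ∂ν)) := by
    refine tendsto_integral_of_dominated_convergence _ (fun n => (hmeas (u n)).inf (hmeas i))
      (integrable_const C) (fun n => ?_) ?_
    · filter_upwards [hC (u n), hC i] with ω h1 h2
      exact abs_min_le_max_abs_abs.trans (max_le h1 h2)
    · filter_upwards [hF] with ω hω using hω.min tendsto_const_nhds
  -- integrate `h k ≤ min (h (u n)) (h i)` for a common upper bound `k` of `u n` and `i`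
  have hmin_ge : ∀ n, c ≤ ∫ ω, min (h (u n) ω) (h i ω) ∂ν := fun n => by
    obtain ⟨k, hnk, hik⟩ := exists_ge_ge (u n) i
    refine (hc k).trans (integral_mono_ae (hint k) ((hint _).inf (hint i)) ?_)
    filter_upwards [hanti hnk, hanti hik] with ω h1 h2 using le_min h1 h2
  exact ae_le_of_integral_le_integral_min hFint (hint i) (hF_eq ▸ ge_of_tendsto' hmin_lim hmin_ge)

variable [Nonempty ι]

theorem exists_monotone_seq_ae_iInf_le_of_isFiniteMeasure {ν : Measure Ω} [IsFiniteMeasure ν]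
    (hmeas : ∀ i, AEStronglyMeasurable (h i) ν) (hC : ∀ i, ∀ᵐ ω ∂ν, ‖h i ω‖ ≤ C)
    (hanti : ∀ ⦃i j⦄, i ≤ j → h j ≤ᵐ[ν] h i) :
    ∃ u : ℕ → ι, Monotone u ∧ ∀ i, ∀ᵐ ω ∂ν, ⨅ n, h (u n) ω ≤ h i ω := by
  have hint_anti : Antitone fun i => ∫ ω, h i ω ∂ν := fun i j hij =>
    integral_mono_ae ((integrable_const C).mono' (hmeas j) (hC j))
      ((integrable_const C).mono' (hmeas i) (hC i)) (hanti hij)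
  have hbdd : BddBelow (Set.range fun i => ∫ ω, h i ω ∂ν) := ⟨-(C * ν.real Set.univ), by
    rintro _ ⟨i, rfl⟩
    exact neg_le_of_abs_le (norm_integral_le_of_norm_le_const (hC i))⟩
  obtain ⟨u, hu, hlim⟩ := (tendsto_atTop_ciInf hint_anti hbdd).exists_monotone_seq
  exact ⟨u, hu, ae_iInf_le_of_tendsto_integral hmeas hC hanti hu (fun i => ciInf_le hbdd i) hlim⟩

theorem exists_monotone_seq_ae_iInf_le {μ : Measure Ω} [SFinite μ]
    (hmeas : ∀ i, AEStronglyMeasurable (h i) μ) (hC : ∀ i, ∀ᵐ ω ∂μ, ‖h i ω‖ ≤ C)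
    (hanti : ∀ ⦃i j⦄, i ≤ j → h j ≤ᵐ[μ] h i) :
    ∃ u : ℕ → ι, Monotone u ∧ ∀ i, ∀ᵐ ω ∂μ, ⨅ n, h (u n) ω ≤ h i ω := by
  have hae : ae μ.toFinite = ae μ := ae_toFinite
  simp only [Filter.EventuallyLE, ← hae] at hC hanti ⊢
  exact exists_monotone_seq_ae_iInf_le_of_isFiniteMeasure
    (fun i => (hmeas i).mono_ac (toFinite_absolutelyContinuous μ)) hC hanti

end DirectedFamily

/-- On a σ-finite measure space, every antitone net `g : ι → (Ω →ₘ[μ] ℝ)` (in the a.e.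
order) with greatest lower bound `0` admits a monotone sequence of indices along which
it converges to `0` almost everywhere (countable-cofinality lemma in the proof of
Theorem 4.4 of the paper, commutative case). -/
theorem exists_monotone_seq_tendsto_ae_of_antitone_isGLB_zero
    {Ω : Type*} [MeasurableSpace Ω] {μ : Measure Ω} [SigmaFinite μ]
    {ι : Type*} [Preorder ι] [Nonempty ι] [IsDirected ι (· ≤ ·)]
    (g : ι → Ω →ₘ[μ] ℝ) (hg : Antitone g) (h0 : IsGLB (Set.range g) 0) :
    ∃ u : ℕ → ι, Monotone u ∧
      ∀ᵐ ω ∂μ, Tendsto (fun n => g (u n) ω) atTop (𝓝 0) := by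
  have hg_nonneg : ∀ i, ∀ᵐ ω ∂μ, 0 ≤ g i ω := fun i => by
    filter_upwards [AEEqFun.coeFn_le.2 (h0.1 (Set.mem_range_self i)), AEEqFun.coeFn_zero (β := ℝ)]
      with ω h1 h2
    rwa [h2] at h1
  obtain ⟨u, hu, hu_le⟩ := exists_monotone_seq_ae_iInf_le (μ := μ) (h := fun i ω => min (g i ω) 1)
    (C := 1) (fun i => (g i).aestronglyMeasurable.inf aestronglyMeasurable_const)
    (fun i => by
      filter_upwards [hg_nonneg i] with ω hω
      exact abs_le.2 ⟨by linarith [le_min hω zero_le_one], min_le_right _ _⟩)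
    (fun i j hij => by
      filter_upwards [AEEqFun.coeFn_le.2 (hg hij)] with ω hω using min_le_min_right 1 hω)
  have hF_nonpos : ∀ᵐ ω ∂μ, ⨅ n, min (g (u n) ω) 1 ≤ 0 := by
    have hF_meas : AEStronglyMeasurable (fun ω => ⨅ n, min (g (u n) ω) 1) μ :=
      (AEMeasurable.iInf fun n =>
        (g (u n)).aemeasurable.min aemeasurable_const).aestronglyMeasurable
    filter_upwards [AEEqFun.ae_le_of_isGLB h0 hF_meas fun i => (hu_le i).mono fun ω hω =>
      hω.trans (min_le_left _ _), AEEqFun.coeFn_zero (β := ℝ)] with ω h1 h2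
    rwa [h2] at h1
  refine ⟨u, hu, ?_⟩
  filter_upwards [hF_nonpos, ae_all_iff.2 fun n => hg_nonneg (u n),
    ae_antitone_of_forall_ae_le (f := fun n => g (u n)) fun m n hmn =>
      AEEqFun.coeFn_le.2 (hg (hu hmn))] with ω hF hnonneg hanti
  exact tendsto_zero_of_iInf_min_one_nonpos hanti hnonneg hF
end

section
/- Define f : ℕ → (ℕ → ℝ) by f n = n · χ_{{n}} (the function taking value n at the point n and 0 elsewhere). Then: (a) the sequence (f n) order-converges to 0 in ℝ^ℕ, i.e., there exists an antitone sequence R : ℕ → (ℕ → ℝ) with R k → 0 pointwise as k → ∞ and f n ≤ R n pointwise for every n; but (b) for every strictly monotone φ : ℕ → ℕ there is no bounded function g : ℕ → ℝ with f (φ k) ≤ g pointwise for all k, i.e., no subsequence of (f n) is order bounded in ℓ∞. -/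
open Filter Topology

/-!
Since `n · χ_{{n}} ≤ χ_{[n, ∞)} · id`, the sequence is dominated by the tails of the identity
function, which decrease and vanish at every point from some index on. A bounded `g` dominating
`φ k · χ_{{φ k}}` for all `k` would satisfy `φ k ≤ g (φ k) ≤ C`, contradicting `φ k → ∞`.
-/

section TailIndicator

variable {ι M : Type*} [LinearOrder ι] [Zero M]

theorem antitone_indicator_Ici [Preorder M] {a : ι → M} (ha : 0 ≤ a) :
    Antitone fun k => (Set.Ici k).indicator a :=
  fun _ _ hkl => Set.indicator_le_indicator_of_subset (Set.Ici_subset_Ici.mpr hkl) ha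

theorem tendsto_indicator_Ici_atTop [TopologicalSpace M] [NoMaxOrder ι] (a : ι → M) (m : ι) :
    Tendsto (fun k => (Set.Ici k).indicator a m) atTop (𝓝 0) :=
  tendsto_const_nhds.congr' <| (eventually_gt_atTop m).mono fun _ hk =>
    (Set.indicator_of_notMem (Set.notMem_Ici.mpr hk) a).symm

theorem single_le_indicator_Ici [Preorder M] {a : ι → M} (ha : 0 ≤ a) (n : ι) :
    Pi.single n (a n) ≤ (Set.Ici n).indicator a := by
  intro m
  rcases eq_or_ne m n with rfl | hmn
  · simp
  · rw [Pi.single_eq_of_ne hmn]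
    exact Set.indicator_nonneg (fun i _ => ha i) m

end TailIndicator

theorem not_bddAbove_range_natCast_of_strictMono {φ : ℕ → ℕ} (hφ : StrictMono φ) :
    ¬ BddAbove (Set.range fun k => (φ k : ℝ)) :=
  not_bddAbove_of_tendsto_atTop (tendsto_natCast_atTop_atTop.comp hφ.tendsto_atTop)

/-- The sequence `f n = n · χ_{{n}}` in `ℝ^ℕ` order-converges to `0` (it is dominated
by an antitone sequence tending to `0` pointwise), yet no subsequence of it is
dominated by a bounded function (the example of Section 3 of the paper, with
`M = ℓ∞(ℂ)` and the summation trace). -/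
theorem order_converges_but_no_bounded_dominated_subsequence
    (f : ℕ → ℕ → ℝ) (hf : ∀ n m, f n m = if m = n then (n : ℝ) else 0) :
    (∃ R : ℕ → ℕ → ℝ, Antitone R ∧
        (∀ m, Tendsto (fun k => R k m) atTop (𝓝 0)) ∧
        (∀ n, f n ≤ R n)) ∧
      ∀ φ : ℕ → ℕ, StrictMono φ →
        ¬ ∃ g : ℕ → ℝ, (∃ C : ℝ, ∀ m, |g m| ≤ C) ∧ ∀ k, f (φ k) ≤ g := by
  have hf_single : ∀ n, f n = Pi.single n (n : ℝ) := fun n => funext fun m => by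
    rw [hf, Pi.single_apply]
  have hid : (0 : ℕ → ℝ) ≤ Nat.cast := fun m : ℕ => m.cast_nonneg
  refine ⟨⟨fun k => (Set.Ici k).indicator Nat.cast, antitone_indicator_Ici hid,
    tendsto_indicator_Ici_atTop _, fun n => hf_single n ▸ single_le_indicator_Ici hid n⟩, ?_⟩
  rintro φ hφ ⟨g, ⟨C, hC⟩, hg⟩
  refine not_bddAbove_range_natCast_of_strictMono hφ ⟨C, ?_⟩
  rintro _ ⟨k, rfl⟩
  calc (φ k : ℝ) = f (φ k) (φ k) := by simp [hf]
    _ ≤ g (φ k) := hg k (φ k)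
    _ ≤ C := (abs_le.mp (hC _)).2
end
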